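/- For every n with 5 ≤ n ≤ 7 and points p_1,…,p_n in general position in P^3, the radical ideal I = I(1^{×n}) = ∩_{j=1}^n m_{p_j} satisfies γ(I) ≥ 5/3; in fact α(I(1^{×5})^(3m)) ≥ 5m for all integers m ≥ 1. -/

import Mathlib

open MvPolynomial Filter

/-- The homogeneous ideal of all forms vanishing at the (projective) point with
coordinate vector `p`. -/
noncomputable def pointIdeal {k : Type*} [Field k] {σ : Type*} (p : σ → k) :
    Ideal (MvPolynomial σ k) :=
  Ideal.span { f | (∃ d, f.IsHomogeneous d) ∧ eval p f = 0 }

/-- The fat points ideal `⋂ⱼ m_{pⱼ}^{mⱼ}` (natural multiplicities). -/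
noncomputable def fatIdeal {k : Type*} [Field k] {N n : ℕ} (p : Fin n → (Fin (N + 1) → k))
    (m : Fin n → ℕ) : Ideal (MvPolynomial (Fin (N + 1)) k) :=
  ⨅ j, pointIdeal (p j) ^ (m j)

/-- The fat points ideal with integer multiplicities, with the convention
`m_p^m = (1)` for `m ≤ 0`. -/
noncomputable def fatIdealZ {k : Type*} [Field k] {N n : ℕ} (p : Fin n → (Fin (N + 1) → k))
    (m : Fin n → ℤ) : Ideal (MvPolynomial (Fin (N + 1)) k) :=
  ⨅ j, pointIdeal (p j) ^ (m j).toNat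

/-- The irrelevant maximal ideal `M = (x_0, …, x_N)`. -/
noncomputable def maxIdeal (k : Type*) [Field k] (N : ℕ) : Ideal (MvPolynomial (Fin (N + 1)) k) :=
  Ideal.span (Set.range X)

/-- `α(I)`: the least `t ≥ 0` such that `I` contains a nonzero form of degree `t`. -/
noncomputable def alpha {k : Type*} [Field k] {σ : Type*}
    (I : Ideal (MvPolynomial σ k)) : ℕ :=
  sInf { t | ∃ f ∈ I, f ≠ 0 ∧ f.IsHomogeneous t }

/-- The sequence `t ↦ α(I^{(t)})/t` attached to the fat points ideal with points `p`
and multiplicities `m`; its limit as `t → ∞` is the Waldschmidt constant `γ`. -/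
noncomputable def alphaSeq {k : Type*} [Field k] {N n : ℕ}
    (p : Fin n → (Fin (N + 1) → k)) (m : Fin n → ℕ) (t : ℕ) : ℝ :=
  (alpha (fatIdeal p fun j => t * m j) : ℝ) / t

/-- `P` holds for `n`-tuples of points of `P^N` in general position: there is a
nonempty Zariski-open subset (the complement of the zero locus of a set `S` of
polynomials in the coordinates of the tuple) of tuples of nonzero coordinate
vectors on which `P` holds. -/
def Generic (k : Type*) [Field k] (N n : ℕ)
    (P : (Fin n → (Fin (N + 1) → k)) → Prop) : Prop :=
  ∃ S : Set (MvPolynomial (Fin n × Fin (N + 1)) k),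
    (∃ p : Fin n → (Fin (N + 1) → k), (∀ j, p j ≠ 0) ∧
      ∃ f ∈ S, eval (fun q => p q.1 q.2) f ≠ 0) ∧
    ∀ p : Fin n → (Fin (N + 1) → k), (∀ j, p j ≠ 0) →
      (∃ f ∈ S, eval (fun q => p q.1 q.2) f ≠ 0) → P p

/-! After a change of coordinates the first four points are the coordinate points `e_0, …, e_3`
and the fifth is a point `q` with no zero coordinate. A form `f` of degree `d` vanishing to
order `s` at `e_0, …, e_3` only has monomials `x^a` with `a_j ≤ d - s`, so the standard Cremona
transformation `x_i ↦ ∏_{j ≠ i} x_j` sends it to `(x_0 x_1 x_2 x_3)^s · G` with `G` of degree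
`3d - 4s`. The Cremona map sends `q` to `q⁻¹`, where the monomial factor does not vanish, so `G`
still vanishes to order `s` at `q⁻¹` and `s ≤ 3d - 4s`. Hence `3 α(I^(s)) ≥ 5 s` for every `s`,
which gives both `α(I^(3m)) ≥ 5m` and `γ(I) ≥ 5/3`; only five of the points are used. -/

section PointIdeal

variable {k : Type*} [Field k] {σ τ : Type*}

lemma map_pointIdeal_le {φ : MvPolynomial σ k →ₐ[k] MvPolynomial τ k} {y : σ → k} {x : τ → k}
    (hφ : ∀ g d, g.IsHomogeneous d → eval y g = 0 →
      (∃ e, (φ g).IsHomogeneous e) ∧ eval x (φ g) = 0) :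
    (pointIdeal y).map φ ≤ pointIdeal x := by
  rw [pointIdeal, Ideal.map_span, Ideal.span_le]
  rintro _ ⟨g, ⟨⟨d, hg⟩, hgy⟩, rfl⟩
  exact Ideal.subset_span (hφ g d hg hgy)

lemma map_mem_pointIdeal_pow {φ : MvPolynomial σ k →ₐ[k] MvPolynomial τ k} {y : σ → k}
    {x : τ → k} (hφ : ∀ g d, g.IsHomogeneous d → eval y g = 0 →
      (∃ e, (φ g).IsHomogeneous e) ∧ eval x (φ g) = 0)
    {s : ℕ} {f : MvPolynomial σ k} (hf : f ∈ pointIdeal y ^ s) : φ f ∈ pointIdeal x ^ s := by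
  refine Ideal.pow_right_mono (map_pointIdeal_le hφ) s ?_
  rw [← Ideal.map_pow]
  exact Ideal.mem_map_of_mem φ hf

lemma eval_aeval (x : τ → k) (g : σ → MvPolynomial τ k) (f : MvPolynomial σ k) :
    eval x (aeval g f) = eval (fun i => eval x (g i)) f :=
  comp_aeval_apply g (aeval x) f

lemma MvPolynomial.IsHomogeneous.degree_eq {g : MvPolynomial σ k} {d : ℕ}
    (hg : g.IsHomogeneous d) {a : σ →₀ ℕ} (ha : a ∈ g.support) : a.degree = d := by
  rw [Finsupp.degree_eq_weight_one]
  exact hg (mem_support_iff.mp ha)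

lemma MvPolynomial.IsHomogeneous.eval_smul [Fintype σ] {g : MvPolynomial σ k} {d : ℕ}
    (hg : g.IsHomogeneous d) (c : k) (x : σ → k) : eval (c • x) g = c ^ d * eval x g := by
  rw [eval_eq', eval_eq', Finset.mul_sum]
  refine Finset.sum_congr rfl fun a ha => ?_
  have hdeg : ∑ i, a i = d := by
    rw [← Finsupp.degree_eq_sum, hg.degree_eq ha]
  simp only [Pi.smul_apply, smul_eq_mul, mul_pow, Finset.prod_mul_distrib,
    Finset.prod_pow_eq_pow_sum, hdeg]
  ring

end PointIdeal

section CoordOrder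

variable {k : Type*} [Field k] {σ : Type*} [DecidableEq σ]

def coordWeight (j : σ) : σ → ℕ := fun i => if i = j then 0 else 1

/-- The order of vanishing of `f` at the coordinate point `e_j`: its order in the variables
`X i`, `i ≠ j`. -/
noncomputable def coordOrder (j : σ) (f : MvPolynomial σ k) : ℕ∞ :=
  (f : MvPowerSeries σ k).weightedOrder (coordWeight j)

lemma coordOrder_mul (j : σ) (f g : MvPolynomial σ k) :
    coordOrder j (f * g) = coordOrder j f + coordOrder j g := by
  simp only [coordOrder, coe_mul, MvPowerSeries.weightedOrder_mul]

lemma coordOrder_le_weight {j : σ} {f : MvPolynomial σ k} {a : σ →₀ ℕ} (ha : a ∈ f.support) :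
    coordOrder j f ≤ Finsupp.weight (coordWeight j) a :=
  MvPowerSeries.weightedOrder_le _ (by rwa [coeff_coe, ← mem_support_iff])

lemma weight_coordWeight_add [Fintype σ] (j : σ) (a : σ →₀ ℕ) :
    Finsupp.weight (coordWeight j) a + a j = a.degree := by
  rw [Finsupp.weight_eq_sum, Finsupp.degree_eq_sum, ← Finset.sum_erase_add _ _ (Finset.mem_univ j),
    ← Finset.sum_erase_add _ _ (Finset.mem_univ j)]
  simp only [coordWeight]
  congr 1
  exact Finset.sum_congr rfl fun i hi => by simp [Finset.ne_of_mem_erase hi]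

noncomputable def coordOrderIdeal (j : σ) (s : ℕ∞) : Ideal (MvPolynomial σ k) where
  carrier := {f | s ≤ coordOrder j f}
  zero_mem' := by simp [coordOrder]
  add_mem' {f g} hf hg := by
    have hfg : min (coordOrder j f) (coordOrder j g) ≤ coordOrder j (f + g) := by
      simpa only [coordOrder, coe_add] using MvPowerSeries.min_weightedOrder_le_add
        (coordWeight j) (f := (f : MvPowerSeries σ k)) (g := (g : MvPowerSeries σ k))
    exact (le_min hf hg).trans hfg
  smul_mem' c f hf := by
    change s ≤ coordOrder j (c * f)
    rw [coordOrder_mul]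
    exact le_add_left hf

lemma mem_coordOrderIdeal {j : σ} {s : ℕ∞} {f : MvPolynomial σ k} :
    f ∈ coordOrderIdeal j s ↔ s ≤ coordOrder j f := Iff.rfl

lemma coordOrderIdeal_mul_le (j : σ) (s t : ℕ∞) :
    coordOrderIdeal (k := k) j s * coordOrderIdeal j t ≤ coordOrderIdeal j (s + t) :=
  Ideal.mul_le.2 fun f hf g hg => by
    rw [mem_coordOrderIdeal, coordOrder_mul]
    exact add_le_add hf hg

end CoordOrder

section CoordinatePoint

variable {k : Type*} [Field k] {σ : Type*} [DecidableEq σ] [Fintype σ]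

lemma eq_single_of_weight_coordWeight_eq_zero {j : σ} {a : σ →₀ ℕ}
    (h : Finsupp.weight (coordWeight j) a = 0) : a = Finsupp.single j a.degree := by
  have hj : a j = a.degree := by simpa [h] using weight_coordWeight_add j a
  ext i
  rcases eq_or_ne i j with rfl | hij
  · simp [hj]
  · rw [Finsupp.weight_eq_sum, Finset.sum_eq_zero_iff] at h
    simpa [coordWeight, hij, Finsupp.single_apply, Ne.symm hij] using h i (Finset.mem_univ i)

lemma MvPolynomial.IsHomogeneous.eval_single_one {g : MvPolynomial σ k} {d : ℕ}
    (hg : g.IsHomogeneous d) (j : σ) :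
    eval (Pi.single j 1) g = coeff (Finsupp.single j d) g := by
  rw [eval_eq', Finset.sum_eq_single (Finsupp.single j d)]
  · rw [Finset.prod_eq_one, mul_one]
    intro i _
    rcases eq_or_ne i j with rfl | hij
    · simp
    · simp [hij]
  · intro b hb hbd
    have hw : Finsupp.weight (coordWeight j) b ≠ 0 := fun hw => hbd <| by
      rw [eq_single_of_weight_coordWeight_eq_zero hw, hg.degree_eq hb]
    obtain ⟨i, -, hi⟩ := Finset.exists_ne_zero_of_sum_ne_zero
      (by rwa [Finsupp.weight_eq_sum] at hw)
    have hij : i ≠ j := by rintro rfl; simp [coordWeight] at hi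
    rw [Finset.prod_eq_zero (Finset.mem_univ i), mul_zero]
    simp_all [coordWeight]
  · intro h
    rw [notMem_support_iff.1 h, zero_mul]

lemma pointIdeal_single_le (j : σ) : pointIdeal (Pi.single j (1 : k)) ≤ coordOrderIdeal j 1 := by
  rw [pointIdeal, Ideal.span_le]
  rintro g ⟨⟨d, hg⟩, hgj⟩
  refine MvPowerSeries.le_weightedOrder _ fun a ha => ?_
  rw [Order.lt_one_iff, Nat.cast_eq_zero] at ha
  rw [coeff_coe, eq_single_of_weight_coordWeight_eq_zero ha]
  by_cases hd : Finsupp.single j a.degree ∈ g.support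
  · have had : a.degree = d := by simpa using hg.degree_eq hd
    rwa [had, ← hg.eval_single_one j]
  · exact notMem_support_iff.1 hd

lemma pointIdeal_single_pow_le (j : σ) (s : ℕ) :
    pointIdeal (Pi.single j (1 : k)) ^ s ≤ coordOrderIdeal j s := by
  induction s with
  | zero => exact fun f _ => by simp [mem_coordOrderIdeal]
  | succ s ih =>
    rw [pow_succ, Nat.cast_succ]
    exact (Ideal.mul_mono ih (pointIdeal_single_le j)).trans (coordOrderIdeal_mul_le j s 1)

lemma coordOrder_eq_zero_of_eval_ne_zero {u : MvPolynomial σ k} {d : ℕ} (hu : u.IsHomogeneous d)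
    {j : σ} (h : eval (Pi.single j 1) u ≠ 0) : coordOrder j u = 0 := by
  rw [hu.eval_single_one] at h
  simpa [Finsupp.weight_single, coordWeight] using
    coordOrder_le_weight (j := j) (mem_support_iff.2 h)

lemma le_of_le_coordOrder {f : MvPolynomial σ k} {e : ℕ} (hf0 : f ≠ 0) (hf : f.IsHomogeneous e)
    {j : σ} {s : ℕ} (hs : s ≤ coordOrder j f) : s ≤ e := by
  obtain ⟨a, ha⟩ := support_nonempty.2 hf0
  have hsa : s ≤ Finsupp.weight (coordWeight j) a := by
    exact_mod_cast hs.trans (coordOrder_le_weight ha)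
  have := weight_coordWeight_add j a
  rw [hf.degree_eq ha] at this
  omega

lemma add_le_of_mem_pointIdeal_single_pow {f : MvPolynomial σ k} {d s : ℕ}
    (hf : f.IsHomogeneous d) {j : σ} (hfj : f ∈ pointIdeal (Pi.single j 1) ^ s) {a : σ →₀ ℕ}
    (ha : a ∈ f.support) : s + a j ≤ d := by
  have hsa : s ≤ Finsupp.weight (coordWeight j) a := by
    exact_mod_cast (pointIdeal_single_pow_le j s hfj).trans (coordOrder_le_weight ha)
  have := weight_coordWeight_add j a
  rw [hf.degree_eq ha] at this
  omega

end CoordinatePoint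

section LinearSubst

open scoped Matrix

variable {k : Type*} [Field k] {σ : Type*} [Fintype σ]

noncomputable def linearSubst (B : Matrix σ σ k) : MvPolynomial σ k →ₐ[k] MvPolynomial σ k :=
  aeval fun i => ∑ j, C (B i j) * X j

lemma MvPolynomial.IsHomogeneous.linearSubst {f : MvPolynomial σ k} {d : ℕ}
    (hf : f.IsHomogeneous d) (B : Matrix σ σ k) : (linearSubst B f).IsHomogeneous d := by
  simpa [_root_.linearSubst, aeval_eq_bind₁] using hf.aeval _ fun i =>
    IsHomogeneous.sum _ _ _ fun j _ => isHomogeneous_C_mul_X (B i j) j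

lemma eval_linearSubst (B : Matrix σ σ k) (x : σ → k) (f : MvPolynomial σ k) :
    eval x (linearSubst B f) = eval (B *ᵥ x) f := by
  rw [linearSubst, eval_aeval]
  congr 2
  funext i
  simp [Matrix.mulVec, dotProduct]

lemma linearSubst_linearSubst (A B : Matrix σ σ k) (f : MvPolynomial σ k) :
    linearSubst A (linearSubst B f) = linearSubst (B * A) f := by
  simp only [linearSubst]
  rw [comp_aeval_apply]
  congr 2
  funext i
  simp only [map_sum, map_mul, aeval_X, aeval_C, algebraMap_eq, Matrix.mul_apply,
    Finset.mul_sum, Finset.sum_mul]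
  rw [Finset.sum_comm]
  exact Finset.sum_congr rfl fun _ _ => Finset.sum_congr rfl fun _ _ => by ring

lemma linearSubst_one (f : MvPolynomial σ k) [DecidableEq σ] :
    linearSubst (1 : Matrix σ σ k) f = f := by
  have hX : (fun i => ∑ j, C ((1 : Matrix σ σ k) i j) * X j) = X := by
    funext i
    simp [Matrix.one_apply]
  rw [linearSubst, hX, aeval_X_left_apply]

lemma linearSubst_injective [DecidableEq σ] {B : Matrix σ σ k} (hB : IsUnit B.det) :
    Function.Injective (linearSubst B) := by
  refine Function.LeftInverse.injective (g := linearSubst B⁻¹) fun f => ?_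
  rw [linearSubst_linearSubst, Matrix.mul_nonsing_inv B hB, linearSubst_one]

lemma linearSubst_mem_pointIdeal_pow (B : Matrix σ σ k) (x : σ → k) {s : ℕ}
    {f : MvPolynomial σ k} (hf : f ∈ pointIdeal (B *ᵥ x) ^ s) :
    linearSubst B f ∈ pointIdeal x ^ s :=
  map_mem_pointIdeal_pow (fun g d hg hgx =>
    ⟨⟨d, hg.linearSubst B⟩, by rw [eval_linearSubst, hgx]⟩) hf

end LinearSubst

section Cremona

variable {k : Type*} [Field k] {σ : Type*} [Fintype σ] [DecidableEq σ]

noncomputable def cremona : MvPolynomial σ k →ₐ[k] MvPolynomial σ k :=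
  aeval fun i => ∏ j ∈ Finset.univ.erase i, X j

lemma cremona_monomial (a : σ →₀ ℕ) (c : k) :
    cremona (monomial a c) =
      monomial (Finsupp.equivFunOnFinite.symm fun j => a.degree - a j) c := by
  rw [cremona, aeval_monomial, monomial_eq, algebraMap_eq,
    Finsupp.prod_fintype _ _ fun _ => pow_zero _, Finsupp.prod_fintype _ _ fun _ => pow_zero _]
  congr 1
  simp_rw [← Finset.prod_pow]
  rw [Finset.prod_comm' (t' := Finset.univ) (s' := fun j => Finset.univ.erase j)
    (by simp [and_comm, ne_comm])]
  refine Finset.prod_congr rfl fun j _ => ?_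
  rw [Finset.prod_pow_eq_pow_sum, Finsupp.coe_equivFunOnFinite_symm, Finsupp.degree_eq_sum,
    ← Finset.sum_erase_add _ _ (Finset.mem_univ j), Nat.add_sub_cancel]

lemma MvPolynomial.IsHomogeneous.cremona {f : MvPolynomial σ k} {d : ℕ} (hf : f.IsHomogeneous d) :
    (cremona f).IsHomogeneous ((Fintype.card σ - 1) * d) := by
  refine hf.aeval _ fun i => ?_
  simpa [Finset.card_erase_of_mem] using
    IsHomogeneous.prod (Finset.univ.erase i) (fun j => (X j : MvPolynomial σ k)) (fun _ => 1)
      fun j _ => isHomogeneous_X k j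

lemma eval_cremona (x : σ → k) (f : MvPolynomial σ k) :
    eval x (cremona f) = eval (fun i => ∏ j ∈ Finset.univ.erase i, x j) f := by
  rw [cremona, eval_aeval]
  simp

lemma cremona_mem_pointIdeal_pow {q : σ → k} (hq : ∀ i, q i ≠ 0) {s : ℕ} {f : MvPolynomial σ k}
    (hf : f ∈ pointIdeal q ^ s) : cremona f ∈ pointIdeal q⁻¹ ^ s := by
  refine map_mem_pointIdeal_pow (fun g d hg hgq => ⟨⟨_, hg.cremona⟩, ?_⟩) hf
  have hprod : (fun i => ∏ j ∈ Finset.univ.erase i, q⁻¹ j) = (∏ j, q⁻¹ j) • q := by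
    funext i
    rw [Pi.smul_apply, smul_eq_mul, ← Finset.mul_prod_erase _ _ (Finset.mem_univ i), Pi.inv_apply,
      mul_comm, mul_inv_cancel_left₀ (hq i)]
  rw [eval_cremona, hprod, hg.eval_smul, hgq, mul_zero]

/-- The quotient of `cremona (x^a)` by `(∏ x_i)^s` is `x^{a'}` with `a'_j = d - s - a_j`. -/
lemma exists_cremona_eq_prod_X_pow_mul {f : MvPolynomial σ k} {d s : ℕ} (hf0 : f ≠ 0)
    (hf : f.IsHomogeneous d) (hs : ∀ a ∈ f.support, ∀ j, s + a j ≤ d) :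
    ∃ G : MvPolynomial σ k, G ≠ 0 ∧ G.IsHomogeneous (Fintype.card σ * (d - s) - d) ∧
      cremona f = (∏ i, X i) ^ s * G := by
  set e : (σ →₀ ℕ) → (σ →₀ ℕ) := fun a => Finsupp.equivFunOnFinite.symm fun j => d - s - a j
  have he : ∀ a j, e a j = d - s - a j := fun _ _ => rfl
  have he_inj : ∀ a ∈ f.support, ∀ b ∈ f.support, e a = e b → a = b := by
    intro a ha b hb hab
    ext j
    have := DFunLike.congr_fun hab j
    have := hs a ha j
    have := hs b hb j
    simp only [he] at *
    omega
  refine ⟨∑ a ∈ f.support, monomial (e a) (coeff a f), fun hG => ?_, ?_, ?_⟩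
  · obtain ⟨a, ha⟩ := support_nonempty.2 hf0
    have hcoeff := congrArg (coeff (e a)) hG
    rw [coeff_sum, Finset.sum_eq_single_of_mem a ha fun b hb hba => by
      rw [coeff_monomial, if_neg fun h => hba (he_inj b hb a ha h)], coeff_monomial, if_pos rfl,
      coeff_zero] at hcoeff
    exact mem_support_iff.1 ha hcoeff
  · refine IsHomogeneous.sum _ _ _ fun a ha => isHomogeneous_monomial _ ?_
    rw [Finsupp.degree_eq_sum]
    simp only [he]
    rw [Finset.sum_tsub_distrib _ fun j _ => by have := hs a ha j; omega, Finset.sum_const,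
      Finset.card_univ, smul_eq_mul, ← Finsupp.degree_eq_sum, hf.degree_eq ha]
  · conv_lhs => rw [f.as_sum, map_sum]
    rw [Finset.mul_sum]
    refine Finset.sum_congr rfl fun a ha => ?_
    rw [cremona_monomial, ← Finset.prod_pow, Finset.prod_congr rfl fun i _ => X_pow_eq_monomial,
      ← monomial_sum_one, monomial_mul, one_mul]
    congr 2
    ext j
    have := hs a ha j
    simp [he, hf.degree_eq ha, Finsupp.single_apply]
    omega

end Cremona

section Bound

open scoped Matrix

variable {k : Type*} [Field k] {σ : Type*} [Fintype σ] [DecidableEq σ]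

/-- Move `x` to a coordinate point: there the order of vanishing is additive and `u` has
order `0`. -/
lemma le_of_mul_mem_pointIdeal_pow {x : σ → k} {j : σ} (hxj : x j ≠ 0) {u h : MvPolynomial σ k}
    {du e s : ℕ} (hu : u.IsHomogeneous du) (hux : eval x u ≠ 0) (hh0 : h ≠ 0)
    (hh : h.IsHomogeneous e) (hmem : u * h ∈ pointIdeal x ^ s) : s ≤ e := by
  set B := (1 : Matrix σ σ k).updateCol j x
  have hB : IsUnit B.det := by
    rw [isUnit_iff_ne_zero, ← Matrix.cramer_apply, Matrix.cramer_one]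
    exact hxj
  have hBj : B *ᵥ Pi.single j 1 = x := by
    rw [Matrix.mulVec_single_one]
    ext i
    simp [B]
  have hord := pointIdeal_single_pow_le j s
    (linearSubst_mem_pointIdeal_pow B _ (hBj ▸ hmem))
  rw [mem_coordOrderIdeal, map_mul, coordOrder_mul, coordOrder_eq_zero_of_eval_ne_zero
    (hu.linearSubst B) (by rwa [eval_linearSubst, hBj]), zero_add] at hord
  exact le_of_le_coordOrder ((map_ne_zero_iff _ (linearSubst_injective hB)).2 hh0)
    (hh.linearSubst B) hord

lemma add_one_mul_le_sub_one_mul {n d s : ℕ} (h : s ≤ n * (d - s) - d) :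
    (n + 1) * s ≤ (n - 1) * d := by
  rcases Nat.eq_zero_or_pos s with rfl | hs
  · simp
  obtain ⟨t, rfl⟩ : ∃ t, d = s + t := Nat.exists_eq_add_of_le <| by
    by_contra hds
    rw [Nat.sub_eq_zero_of_le (not_le.1 hds).le, mul_zero, Nat.zero_sub] at h
    omega
  obtain ⟨m, rfl⟩ : ∃ m, n = m + 1 := Nat.exists_eq_add_of_le' <| by
    by_contra hn
    rw [Nat.lt_one_iff.1 (not_le.1 hn), zero_mul, Nat.zero_sub] at h
    omega
  rw [Nat.add_sub_cancel_left] at h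
  have h1 : (m + 1) * t = m * t + t := by ring
  have h2 : (m + 1 + 1) * s = m * s + 2 * s := by ring
  have h3 : (m + 1 - 1) * (s + t) = m * s + m * t := by rw [Nat.add_sub_cancel]; ring
  omega

theorem card_add_one_mul_le_of_mem_pointIdeal_pow [Nonempty σ] {q : σ → k} (hq : ∀ i, q i ≠ 0)
    {f : MvPolynomial σ k} {d s : ℕ} (hf0 : f ≠ 0) (hf : f.IsHomogeneous d)
    (hfe : ∀ j, f ∈ pointIdeal (Pi.single j 1) ^ s) (hfq : f ∈ pointIdeal q ^ s) :
    (Fintype.card σ + 1) * s ≤ (Fintype.card σ - 1) * d := by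
  obtain ⟨G, hG0, hG, hfG⟩ := exists_cremona_eq_prod_X_pow_mul hf0 hf fun a ha j =>
    add_le_of_mem_pointIdeal_single_pow hf (hfe j) ha
  have hX : (∏ i, X i : MvPolynomial σ k).IsHomogeneous (Fintype.card σ) := by
    convert IsHomogeneous.prod _ (fun i => (X i : MvPolynomial σ k)) (fun _ => 1)
      fun i _ => isHomogeneous_X k i using 1
    simp
  have hXq : eval q⁻¹ ((∏ i, X i) ^ s) ≠ 0 := by
    simp [Finset.prod_ne_zero_iff, hq]
  exact add_one_mul_le_sub_one_mul <| le_of_mul_mem_pointIdeal_pow (x := q⁻¹)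
    (j := Classical.arbitrary σ) (inv_ne_zero (hq _)) (hX.pow s) hXq hG0 hG
    (hfG ▸ cremona_mem_pointIdeal_pow hq hfq)

end Bound

section FrameMinors

open scoped Matrix

variable {k : Type*} [Field k] {σ : Type*} [Fintype σ] [DecidableEq σ]

/-- The product of the maximal minors of the matrix with rows `P i` and `y`: it is nonzero iff
any `card σ` of these `card σ + 1` vectors are linearly independent. -/
def frameMinors {R : Type*} [CommRing R] (P : Matrix σ σ R) (y : σ → R) : R :=
  P.det * ∏ i, (P.updateRow i y).det

lemma RingHom.map_frameMinors {R S : Type*} [CommRing R] [CommRing S] (φ : R →+* S)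
    (P : Matrix σ σ R) (y : σ → R) : φ (frameMinors P y) = frameMinors (P.map φ) (φ ∘ y) := by
  simp only [frameMinors, map_mul, map_prod, RingHom.map_det, RingHom.mapMatrix_apply,
    Matrix.map_updateRow]

theorem card_add_one_mul_le_of_frameMinors_ne_zero [Nonempty σ] {P : Matrix σ σ k} {y : σ → k}
    (hPy : frameMinors P y ≠ 0) {f : MvPolynomial σ k} {d s : ℕ} (hf0 : f ≠ 0)
    (hf : f.IsHomogeneous d) (hfP : ∀ j, f ∈ pointIdeal (P j) ^ s) (hfy : f ∈ pointIdeal y ^ s) :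
    (Fintype.card σ + 1) * s ≤ (Fintype.card σ - 1) * d := by
  obtain ⟨hP, hPy⟩ := mul_ne_zero_iff.1 hPy
  have hPu : IsUnit P.det := isUnit_iff_ne_zero.2 hP
  have hPt : IsUnit Pᵀ.det := by rwa [Matrix.det_transpose]
  -- Cramer's rule: the coordinates of `y` in the basis `P` are ratios of the maximal minors.
  have hq : ∀ i, (y ᵥ* P⁻¹) i ≠ 0 := fun i => by
    have := congrFun (Matrix.det_smul_inv_vecMul_eq_cramer_transpose P y hPu) i
    rw [Matrix.cramer_transpose_apply, Pi.smul_apply, smul_eq_mul] at this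
    exact right_ne_zero_of_mul (this ▸ Finset.prod_ne_zero_iff.1 hPy i (Finset.mem_univ i))
  have hPq : Pᵀ *ᵥ (y ᵥ* P⁻¹) = y := by
    rw [Matrix.mulVec_transpose, Matrix.vecMul_vecMul, Matrix.nonsing_inv_mul P hPu,
      Matrix.vecMul_one]
  have hPe : ∀ j, Pᵀ *ᵥ Pi.single j 1 = P j := fun j => by
    rw [Matrix.mulVec_single_one]
    rfl
  exact card_add_one_mul_le_of_mem_pointIdeal_pow hq
    ((map_ne_zero_iff _ (linearSubst_injective hPt)).2 hf0) (hf.linearSubst _)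
    (fun j => linearSubst_mem_pointIdeal_pow _ _ (by rw [hPe]; exact hfP j))
    (linearSubst_mem_pointIdeal_pow _ _ (by rwa [hPq]))

end FrameMinors

section FatPoints

variable {k : Type*} [Field k]

lemma exists_isHomogeneous_one_mem_pointIdeal {σ : Type*} [Nontrivial σ] {x : σ → k}
    (hx : x ≠ 0) : ∃ l : MvPolynomial σ k, l ≠ 0 ∧ l.IsHomogeneous 1 ∧ l ∈ pointIdeal x := by
  classical
  obtain ⟨i, hi⟩ := Function.ne_iff.1 hx
  obtain ⟨j, hji⟩ := exists_ne i
  have hl := (isHomogeneous_C_mul_X (x j) i).sub (isHomogeneous_C_mul_X (x i) j)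
  refine ⟨C (x j) * X i - C (x i) * X j, fun h => hi ?_, hl,
    Ideal.subset_span ⟨⟨1, hl⟩, by simp [mul_comm]⟩⟩
  simpa [coeff_X, Finsupp.single_left_inj, hji, hji.symm] using
    congrArg (coeff (Finsupp.single j 1)) h

lemma exists_isHomogeneous_mem_fatIdeal {N n : ℕ} [Nontrivial (Fin (N + 1))]
    {p : Fin n → Fin (N + 1) → k} (hp : ∀ j, p j ≠ 0) (m : Fin n → ℕ) :
    ∃ f ∈ fatIdeal p m, f ≠ 0 ∧ ∃ d, f.IsHomogeneous d := by
  choose l hl0 hl hlp using fun j => exists_isHomogeneous_one_mem_pointIdeal (hp j)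
  refine ⟨∏ j, l j ^ m j, Ideal.mem_iInf.2 fun j => ?_,
    Finset.prod_ne_zero_iff.2 fun j _ => pow_ne_zero _ (hl0 j), _,
    IsHomogeneous.prod _ _ _ fun j _ => (hl j).pow _⟩
  rw [← Finset.mul_prod_erase _ _ (Finset.mem_univ j)]
  exact Ideal.mul_mem_right _ _ (Ideal.pow_mem_pow (hlp j) _)

theorem add_two_mul_le_mul_alpha_fatIdeal {N n : ℕ} [Nontrivial (Fin (N + 1))] (hn : N + 2 ≤ n)
    {p : Fin n → Fin (N + 1) → k} (hp : ∀ j, p j ≠ 0)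
    (hframe : frameMinors (Matrix.of fun i => p (Fin.castLE (by omega) i)) (p ⟨N + 1, by omega⟩)
      ≠ 0) (s : ℕ) :
    (N + 2) * s ≤ N * alpha (fatIdeal p fun _ => s) := by
  obtain ⟨f, hf, hf0, d, hfd⟩ := exists_isHomogeneous_mem_fatIdeal hp fun _ => s
  obtain ⟨g, hg, hg0, hgα⟩ := Nat.sInf_mem (s := {t | ∃ f ∈ fatIdeal p fun _ => s, f ≠ 0 ∧
    f.IsHomogeneous t}) ⟨d, f, hf, hf0, hfd⟩
  have hmem : ∀ j, g ∈ pointIdeal (p j) ^ s := Ideal.mem_iInf.1 hg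
  have h := card_add_one_mul_le_of_frameMinors_ne_zero hframe hg0 hgα (fun j => hmem _) (hmem _)
  rw [Fintype.card_fin, Nat.add_sub_cancel] at h
  exact h

lemma frameMinors_vandermonde_ne_zero [CharZero k] (N : ℕ) :
    frameMinors (Matrix.vandermonde fun i : Fin (N + 1) => ((i : ℕ) : k))
      (fun c => ((N + 1 : ℕ) : k) ^ (c : ℕ)) ≠ 0 := by
  refine mul_ne_zero (Matrix.det_vandermonde_ne_zero_iff.2
    (Nat.cast_injective.comp Fin.val_injective)) (Finset.prod_ne_zero_iff.2 fun i _ => ?_)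
  have hrow : (Matrix.vandermonde fun i : Fin (N + 1) => ((i : ℕ) : k)).updateRow i
      (fun c => ((N + 1 : ℕ) : k) ^ (c : ℕ)) =
      Matrix.vandermonde fun r => ((if r = i then N + 1 else r : ℕ) : k) := by
    ext r c
    by_cases hr : r = i <;> simp [Matrix.updateRow_apply, Matrix.vandermonde_apply, hr]
  rw [hrow, Matrix.det_vandermonde_ne_zero_iff]
  refine Nat.cast_injective.comp fun a b hab => ?_
  have := a.isLt
  have := b.isLt
  split_ifs at hab <;> omega

end FatPoints

section Genericity

variable {k : Type*} [Field k]

lemma Generic.mono {N n : ℕ} {P Q : (Fin n → Fin (N + 1) → k) → Prop} (h : Generic k N n P)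
    (hPQ : ∀ p, P p → Q p) : Generic k N n Q := by
  obtain ⟨S, hS, hP⟩ := h
  exact ⟨S, hS, fun p hp hpS => hPQ p (hP p hp hpS)⟩

theorem generic_add_two_mul_le_mul_alpha_fatIdeal [CharZero k] {N n : ℕ}
    [Nontrivial (Fin (N + 1))] (hn : N + 2 ≤ n) :
    Generic k N n fun p => ∀ s, (N + 2) * s ≤ N * alpha (fatIdeal p fun _ => s) := by
  set F : MvPolynomial (Fin n × Fin (N + 1)) k :=
    frameMinors (Matrix.of fun i c => X (Fin.castLE (by omega) i, c))
      (fun c => X (⟨N + 1, by omega⟩, c))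
  have hF : ∀ p : Fin n → Fin (N + 1) → k, eval (fun q => p q.1 q.2) F =
      frameMinors (Matrix.of fun i => p (Fin.castLE (by omega) i)) (p ⟨N + 1, by omega⟩) :=
    fun p => by
      rw [RingHom.map_frameMinors]
      congr 1
      · ext i c
        simp
      · ext c
        simp
  refine ⟨{F}, ⟨fun j c => ((j : ℕ) : k) ^ (c : ℕ), fun j h => by simpa using congrFun h 0,
    F, rfl, ?_⟩, ?_⟩
  · rw [hF (fun j c => ((j : ℕ) : k) ^ (c : ℕ))]
    exact frameMinors_vandermonde_ne_zero N
  · rintro p hp ⟨_, rfl, hFp⟩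
    exact add_two_mul_le_mul_alpha_fatIdeal hn hp (by rwa [hF] at hFp)

lemma div_le_of_tendsto_alphaSeq {N n : ℕ} {p : Fin n → Fin (N + 1) → k} {a b : ℕ} (hb : 0 < b)
    (h : ∀ s, a * s ≤ b * alpha (fatIdeal p fun _ => s)) {γ : ℝ}
    (hγ : Tendsto (alphaSeq p fun _ => 1) atTop (nhds γ)) : (a : ℝ) / b ≤ γ := by
  refine ge_of_tendsto hγ (eventually_atTop.2 ⟨1, fun t ht => ?_⟩)
  simp only [alphaSeq, mul_one]
  rw [div_le_div_iff₀ (by positivity) (by positivity)]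
  exact_mod_cast (h t).trans_eq (mul_comm _ _)

end Genericity

/-- For every `5 ≤ n ≤ 7` and `n` points in general position in `ℙ³`, the radical
ideal `I = I(1^{×n})` satisfies `γ(I) ≥ 5/3`; in fact, for `5` general points,
`α(I(1^{×5})^(3m)) ≥ 5m` for all `m ≥ 1`. -/
theorem statement11 (k : Type*) [Field k] [CharZero k] :
    (∀ n : ℕ, 5 ≤ n → n ≤ 7 →
      Generic k 3 n (fun p =>
        ∀ γ : ℝ, Tendsto (alphaSeq p (fun _ => 1)) atTop (nhds γ) → 5 / 3 ≤ γ)) ∧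
    Generic k 3 5 (fun p =>
      ∀ m : ℕ, 1 ≤ m → 5 * m ≤ alpha (fatIdeal p (fun _ => 3 * m))) := by
  have hgen (n : ℕ) (hn : 5 ≤ n) :
      Generic k 3 n fun p => ∀ s, 5 * s ≤ 3 * alpha (fatIdeal p fun _ => s) :=
    generic_add_two_mul_le_mul_alpha_fatIdeal hn
  refine ⟨fun n hn _ => (hgen n hn).mono fun p hp γ hγ => ?_,
    (hgen 5 le_rfl).mono fun p hp m _ => ?_⟩
  · simpa using div_le_of_tendsto_alphaSeq (a := 5) (b := 3) (by norm_num) hp hγ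
  · have := hp (3 * m)
    omega
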